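/- Let I : ℤ×ℤ → ℝ be a finitely supported function with I ≠ 0, and fix positive integers s₁, s₂. Then there exists τ > 0 such that ‖I⊗X‖_F ≥ τ·‖X‖_F for every function X supported in the s₁×s₂ grid. (In other words, the smallest convolution eigenvalue σ_min(I) of a nonzero image is strictly positive, i.e. the associated Toeplitz operator is nonsingular.) -/

import Mathlib

/-- Images, kernels, and filters: finitely supported functions `ℤ × ℤ → ℝ`. -/
abbrev Img := (ℤ × ℤ) →₀ ℝ

/-- Discrete 2D convolution: `(X ⊗ Y)(i,j) = ∑_{(u,v)} X((i,j)-(u,v)) * Y(u,v)`. -/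
noncomputable def conv (X Y : Img) : Img :=
  X.sum fun a xa => Y.sum fun b yb => Finsupp.single (a + b) (xa * yb)

/-- Frobenius norm `‖X‖_F = √(∑ X(i,j)²)`. -/
noncomputable def frob (X : Img) : ℝ := Real.sqrt (X.sum fun _ c => c ^ 2)

/-- Inner product `⟨X, Y⟩ = ∑ X(i,j) * Y(i,j)`. -/
noncomputable def inner2 (X Y : Img) : ℝ := X.sum fun p c => c * Y p

/-- ℓ¹ norm `‖X‖₁ = ∑ |X(i,j)|`. -/
noncomputable def l1 (X : Img) : ℝ := X.sum fun _ c => |c|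

/-- The simplex `S` of blur kernels: nonnegative entries summing to one. -/
def InSimplex (K : Img) : Prop := (∀ p, 0 ≤ K p) ∧ (K.sum fun _ c => c) = 1

/-- `X` is supported in the `a × b` grid `{0,…,a-1} × {0,…,b-1}`. -/
def SuppIn (a b : ℕ) (X : Img) : Prop :=
  ∀ p : ℤ × ℤ, ¬(0 ≤ p.1 ∧ p.1 < (a : ℤ) ∧ 0 ≤ p.2 ∧ p.2 < (b : ℤ)) → X p = 0

/-!
Convolution by `I` is multiplication by `I` in the group algebra `ℝ[ℤ × ℤ]`, which has no zero
divisors, so `X ↦ I ⊗ X` is injective. Restricted to images supported in a fixed finite set `G`,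
it is an injective linear map between finite-dimensional Euclidean spaces (the target being
indexed by `supp I + G`), under which `‖·‖_F` becomes the Euclidean norm; such a map is bounded
below.
-/

open Finset Pointwise

lemma conv_eq_coeff_mul (X Y : Img) :
    conv X Y = (AddMonoidAlgebra.ofCoeff X * AddMonoidAlgebra.ofCoeff Y).coeff := by
  simp [conv, AddMonoidAlgebra.mul_def, AddMonoidAlgebra.coeff_finsuppSum,
    AddMonoidAlgebra.coeff_single]

lemma support_conv_subset (X Y : Img) : (conv X Y).support ⊆ X.support + Y.support := by
  rw [conv_eq_coeff_mul]
  exact AddMonoidAlgebra.support_coeff_mul_subset _ _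

lemma conv_eq_zero_iff {X Y : Img} : conv X Y = 0 ↔ X = 0 ∨ Y = 0 := by
  rw [conv_eq_coeff_mul, AddMonoidAlgebra.coeff_eq_zero, mul_eq_zero,
    AddMonoidAlgebra.ofCoeff_eq_zero, AddMonoidAlgebra.ofCoeff_eq_zero]

noncomputable def convLeft (I : Img) : Img →ₗ[ℝ] Img :=
  (AddMonoidAlgebra.coeffLinearEquiv ℝ).toLinearMap ∘ₗ
    LinearMap.mulLeft ℝ (AddMonoidAlgebra.ofCoeff I) ∘ₗ
    (AddMonoidAlgebra.coeffLinearEquiv ℝ).symm.toLinearMap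

lemma convLeft_apply (I X : Img) : convLeft I X = conv I X := by
  simp [convLeft, conv_eq_coeff_mul]

section Euclidean

variable (s : Finset (ℤ × ℤ))

noncomputable def restrictToEuclidean : Img →ₗ[ℝ] EuclideanSpace ℝ s where
  toFun X := WithLp.toLp 2 fun p => X p
  map_add' _ _ := rfl
  map_smul' _ _ := rfl

noncomputable def extendFromEuclidean : EuclideanSpace ℝ s →ₗ[ℝ] Img :=
  Finsupp.lmapDomain ℝ ℝ Subtype.val ∘ₗ
    (Finsupp.linearEquivFunOnFinite ℝ ℝ s).symm.toLinearMap ∘ₗ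
    (WithLp.linearEquiv 2 ℝ (s → ℝ)).toLinearMap

variable {s}

@[simp]
lemma restrictToEuclidean_apply (X : Img) (p : s) : restrictToEuclidean s X p = X p := rfl

lemma extendFromEuclidean_apply_coe (x : EuclideanSpace ℝ s) (p : s) :
    extendFromEuclidean s x p = x p := by
  simp [extendFromEuclidean, Finsupp.mapDomain_apply Subtype.val_injective]

lemma extendFromEuclidean_apply_of_notMem (x : EuclideanSpace ℝ s) {p : ℤ × ℤ} (hp : p ∉ s) :
    extendFromEuclidean s x p = 0 := by
  simp [extendFromEuclidean, Finsupp.mapDomain_of_notMem_range, hp]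

lemma support_extendFromEuclidean_subset (x : EuclideanSpace ℝ s) :
    (extendFromEuclidean s x).support ⊆ s := fun _ hp =>
  by_contra fun h => Finsupp.mem_support_iff.1 hp (extendFromEuclidean_apply_of_notMem x h)

lemma restrictToEuclidean_extendFromEuclidean (x : EuclideanSpace ℝ s) :
    restrictToEuclidean s (extendFromEuclidean s x) = x := by
  ext p
  exact extendFromEuclidean_apply_coe x p

lemma extendFromEuclidean_restrictToEuclidean {X : Img} (hX : X.support ⊆ s) :
    extendFromEuclidean s (restrictToEuclidean s X) = X := by
  ext p
  by_cases hp : p ∈ s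
  · exact extendFromEuclidean_apply_coe _ ⟨p, hp⟩
  · rw [extendFromEuclidean_apply_of_notMem _ hp,
      Finsupp.notMem_support_iff.1 fun h => hp (hX h)]

lemma norm_restrictToEuclidean {X : Img} (hX : X.support ⊆ s) :
    ‖restrictToEuclidean s X‖ = frob X := by
  rw [EuclideanSpace.norm_eq, frob, Finsupp.sum,
    Finset.sum_subset hX fun p _ hp => by simp [Finsupp.notMem_support_iff.1 hp],
    ← Finset.sum_coe_sort s]
  simp

end Euclidean

theorem exists_pos_mul_frob_le_frob_conv_of_support_subset {I : Img} (hI : I ≠ 0)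
    (G : Finset (ℤ × ℤ)) :
    ∃ τ > 0, ∀ X : Img, X.support ⊆ G → τ * frob X ≤ frob (conv I X) := by
  set S := I.support + G
  have hS : ∀ X : Img, X.support ⊆ G → (conv I X).support ⊆ S := fun X hX =>
    (support_conv_subset I X).trans (add_subset_add_left hX)
  let T := restrictToEuclidean S ∘ₗ convLeft I ∘ₗ extendFromEuclidean G
  have hT : ∀ x, T x = restrictToEuclidean S (conv I (extendFromEuclidean G x)) := fun x => by
    simp [T, convLeft_apply]
  have hT_inj : Function.Injective T := by
    refine (injective_iff_map_eq_zero T).2 fun x hx => ?_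
    rw [hT] at hx
    have hconv : conv I (extendFromEuclidean G x) = 0 := by
      rw [← extendFromEuclidean_restrictToEuclidean (hS _ (support_extendFromEuclidean_subset x)),
        hx, map_zero]
    rw [← restrictToEuclidean_extendFromEuclidean x, (conv_eq_zero_iff.1 hconv).resolve_left hI,
      map_zero]
  obtain ⟨K, -, hK⟩ := T.injective_iff_antilipschitz.1 hT_inj
  obtain ⟨τ, hτ, hT_bound⟩ := antilipschitzWith_iff_exists_mul_le_norm.1 ⟨K, hK⟩
  refine ⟨τ, hτ, fun X hX => ?_⟩
  have h := hT_bound (restrictToEuclidean G X)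
  rwa [hT, extendFromEuclidean_restrictToEuclidean hX, norm_restrictToEuclidean hX,
    norm_restrictToEuclidean (hS X hX)] at h

lemma SuppIn.support_subset {a b : ℕ} {X : Img} (hX : SuppIn a b X) :
    X.support ⊆ Ico 0 (a : ℤ) ×ˢ Ico 0 (b : ℤ) := by
  intro p hp
  by_contra hp'
  refine Finsupp.mem_support_iff.1 hp (hX p ?_)
  simpa [and_assoc] using hp'

theorem exists_pos_frob_conv_lower_bound_general
    (I : Img) (hI : I ≠ 0) (s₁ s₂ : ℕ) :
    ∃ τ : ℝ, 0 < τ ∧ ∀ X : Img, SuppIn s₁ s₂ X → τ * frob X ≤ frob (conv I X) := by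
  obtain ⟨τ, hτ, h⟩ :=
    exists_pos_mul_frob_le_frob_conv_of_support_subset hI (Ico 0 (s₁ : ℤ) ×ˢ Ico 0 (s₂ : ℤ))
  exact ⟨τ, hτ, fun X hX => h X hX.support_subset⟩

/-- For a nonzero image, the smallest convolution eigenvalue is strictly positive:
the Toeplitz operator is nonsingular. -/
theorem exists_pos_frob_conv_lower_bound
    (I : Img) (hI : I ≠ 0) (s₁ s₂ : ℕ) (hs₁ : 0 < s₁) (hs₂ : 0 < s₂) :
    ∃ τ : ℝ, 0 < τ ∧ ∀ X : Img, SuppIn s₁ s₂ X → τ * frob X ≤ frob (conv I X) :=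
  exists_pos_frob_conv_lower_bound_general I hI s₁ s₂
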